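/- arXiv:2106.05731 — 4 statements merged into one kernel-verified Lean document; each statement's English description precedes it below -/
import Mathlib

section
/- Let K be a finite type, y : K, q : K → ℝ with q y = 1, and f : K → ℝ. Then ∑_{S ∋ y} (∏_{s ∈ S, s ≠ y} q s)(∏_{t ∉ S} (1 - q t)) · (∑_{z ∈ S, z ≠ y} f z) = ∑_{z ≠ y} q z · f z. -/
/-!
Writing `S = insert y T` with `T ⊆ K \ {y}`, the weight of `S` is `subsetWeight q (K \ {y}) T`,
so the left side is the expectation of `∑ z ∈ T, f z` for a random subset `T`. By linearity of
expectation it is `∑ z, q z * f z`, as `z` lies in the random subset with probability `q z`.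
-/

open Finset

lemma Finset.sum_powerset_insert_filter_mem {α β : Type*} [AddCommMonoid β] [DecidableEq α]
    {a : α} {s : Finset α} (ha : a ∉ s) (f : Finset α → β) :
    ∑ t ∈ (insert a s).powerset with a ∈ t, f t = ∑ t ∈ s.powerset, f (insert a t) := by
  rw [sum_filter, sum_powerset_insert ha,
    sum_eq_zero fun t ht ↦ if_neg (notMem_mono (mem_powerset.1 ht) ha), zero_add]
  simp only [mem_insert_self, if_true]

section SubsetWeight

variable {K : Type*} [DecidableEq K] (q : K → ℝ)

/-- The probability that the random subset of `A` containing each `i` independently with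
probability `q i` equals `T`. -/
def subsetWeight (A T : Finset K) : ℝ :=
  (∏ s ∈ T, q s) * ∏ t ∈ A \ T, (1 - q t)

lemma sum_subsetWeight (A : Finset K) : ∑ T ∈ A.powerset, subsetWeight q A T = 1 := by
  simp only [subsetWeight, ← prod_add, add_sub_cancel, prod_const_one]

lemma subsetWeight_insert {z : K} {B T : Finset K} (hz : z ∉ B) (hT : T ⊆ B) :
    subsetWeight q (insert z B) (insert z T) = q z * subsetWeight q B T := by
  rw [subsetWeight, subsetWeight, prod_insert (notMem_mono hT hz), insert_sdiff_insert,
    sdiff_insert_of_notMem hz, mul_assoc]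

lemma sum_subsetWeight_filter_mem {z : K} {A : Finset K} (hz : z ∈ A) :
    ∑ T ∈ A.powerset with z ∈ T, subsetWeight q A T = q z := by
  rw [← insert_erase hz, sum_powerset_insert_filter_mem (notMem_erase z A),
    sum_congr rfl fun T hT ↦ subsetWeight_insert q (notMem_erase z A) (mem_powerset.1 hT),
    ← mul_sum, sum_subsetWeight, mul_one]

lemma sum_subsetWeight_mul_sum (A : Finset K) (f : K → ℝ) :
    ∑ T ∈ A.powerset, subsetWeight q A T * ∑ z ∈ T, f z = ∑ z ∈ A, q z * f z := by
  calc ∑ T ∈ A.powerset, subsetWeight q A T * ∑ z ∈ T, f z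
      = ∑ T ∈ A.powerset, ∑ z ∈ A, if z ∈ T then subsetWeight q A T * f z else 0 := by
        refine sum_congr rfl fun T hT ↦ ?_
        rw [← sum_filter, filter_mem_eq_inter, inter_eq_right.2 (mem_powerset.1 hT), mul_sum]
    _ = ∑ z ∈ A, (∑ T ∈ A.powerset with z ∈ T, subsetWeight q A T) * f z := by
        rw [sum_comm]
        simp only [sum_filter, sum_mul, ite_mul, zero_mul]
    _ = ∑ z ∈ A, q z * f z :=
        sum_congr rfl fun z hz ↦ by rw [sum_subsetWeight_filter_mem q hz]

end SubsetWeight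

theorem stmt_2_general {K : Type*} [Fintype K] [DecidableEq K] (y : K) (q : K → ℝ)
    (f : K → ℝ) :
    ∑ S ∈ Finset.univ.filter (fun S : Finset K => y ∈ S),
      (∏ s ∈ S.erase y, q s) * (∏ t ∈ Sᶜ, (1 - q t)) * (∑ z ∈ S.erase y, f z)
      = ∑ z ∈ Finset.univ.filter (fun z => z ≠ y), q z * f z := by
  have hy : y ∉ univ.erase y := notMem_erase y univ
  have summand (T : Finset K) (hT : T ⊆ univ.erase y) :
      (∏ s ∈ (insert y T).erase y, q s) * (∏ t ∈ (insert y T)ᶜ, (1 - q t)) *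
        ∑ z ∈ (insert y T).erase y, f z = subsetWeight q (univ.erase y) T * ∑ z ∈ T, f z := by
    rw [erase_insert (notMem_mono hT hy), compl_insert, compl_eq_univ_sdiff, ← erase_sdiff_comm,
      subsetWeight]
  conv_lhs => rw [← powerset_univ, ← insert_erase (mem_univ y)]
  rw [sum_powerset_insert_filter_mem hy,
    sum_congr rfl fun T hT ↦ summand T (mem_powerset.1 hT), sum_subsetWeight_mul_sum,
    filter_ne']

theorem stmt_2 {K : Type*} [Fintype K] [DecidableEq K] (y : K) (q : K → ℝ) (hq : q y = 1)
    (f : K → ℝ) :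
    ∑ S ∈ Finset.univ.filter (fun S : Finset K => y ∈ S),
      (∏ s ∈ S.erase y, q s) * (∏ t ∈ Sᶜ, (1 - q t)) * (∑ z ∈ S.erase y, f z)
      = ∑ z ∈ Finset.univ.filter (fun z => z ≠ y), q z * f z :=
  stmt_2_general y q f
end

section
/- Let K be a finite type, y : K, q : K → ℝ with q y = 1, and h : K → ℝ. Then ∑_{S ∋ y} (∏_{s ∈ S, s ≠ y} q s)(∏_{t ∉ S} (1 - q t)) · (∑_{z ∉ S} h z) = ∑_{z ≠ y} (1 - q z) · h z. -/
open Finset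

lemma aux_sum_one {K : Type*} [DecidableEq K] (A : Finset K) (q : K → ℝ) :
    ∑ T ∈ A.powerset, (∏ s ∈ T, q s) * ∏ t ∈ A \ T, (1 - q t) = 1 := by
  rw [← Finset.prod_add]; simp

lemma aux_key {K : Type*} [Fintype K] [DecidableEq K] (y z : K) (hz : z ≠ y)
    (q : K → ℝ) :
    ∑ S ∈ Finset.univ.filter (fun S : Finset K => y ∈ S ∧ z ∉ S),
      (∏ s ∈ S.erase y, q s) * (∏ t ∈ Sᶜ, (1 - q t)) = 1 - q z := by
  set A : Finset K := (Finset.univ.erase y).erase z with hA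
  have hres : ∑ S ∈ Finset.univ.filter (fun S : Finset K => y ∈ S ∧ z ∉ S),
      (∏ s ∈ S.erase y, q s) * (∏ t ∈ Sᶜ, (1 - q t))
      = ∑ T ∈ A.powerset, (1 - q z) * ((∏ s ∈ T, q s) * ∏ t ∈ A \ T, (1 - q t)) := by
    refine Finset.sum_bij' (fun S _ => S.erase y) (fun T _ => insert y T) ?_ ?_ ?_ ?_ ?_
    · intro S hS
      simp only [mem_filter, mem_univ, true_and] at hS
      simp only [hA, mem_powerset]
      intro x hx
      simp only [mem_erase] at hx ⊢
      exact ⟨fun he => hS.2 (he ▸ hx.2), hx.1, mem_univ x⟩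
    · intro T hT
      simp only [hA, mem_powerset] at hT
      simp only [mem_filter, mem_univ, true_and, mem_insert, true_or]
      rintro (rfl | hzT)
      · exact hz rfl
      · have := hT hzT; simp at this
    · intro S hS
      simp only [mem_filter, mem_univ, true_and] at hS
      exact Finset.insert_erase hS.1
    · intro T hT
      simp only [hA, mem_powerset] at hT
      apply Finset.erase_insert
      intro hy; have := hT hy; simp at this
    · intro S hS
      simp only [mem_filter, mem_univ, true_and] at hS
      have hSc : Sᶜ = insert z (A \ S.erase y) := by
        ext x
        simp only [mem_compl, mem_insert, mem_sdiff, hA, mem_erase, mem_univ, and_true]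
        constructor
        · intro hx
          by_cases hxz : x = z
          · exact Or.inl hxz
          · exact Or.inr ⟨⟨hxz, fun he => hx (he ▸ hS.1)⟩, fun hc => hx hc.2⟩
        · rintro (rfl | ⟨⟨_, hxy⟩, hxS⟩)
          · exact hS.2
          · intro hxS'
            exact hxS ⟨hxy, hxS'⟩
      rw [hSc, Finset.prod_insert (by simp [hA])]
      ring
  rw [hres, ← Finset.mul_sum, aux_sum_one, mul_one]

theorem stmt_3 {K : Type*} [Fintype K] [DecidableEq K] (y : K) (q : K → ℝ) (hq : q y = 1)
    (h : K → ℝ) :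
    ∑ S ∈ Finset.univ.filter (fun S : Finset K => y ∈ S),
      (∏ s ∈ S.erase y, q s) * (∏ t ∈ Sᶜ, (1 - q t)) * (∑ z ∈ Sᶜ, h z)
      = ∑ z ∈ Finset.univ.filter (fun z => z ≠ y), (1 - q z) * h z := by
  have step1 : ∀ S : Finset K,
      (∏ s ∈ S.erase y, q s) * (∏ t ∈ Sᶜ, (1 - q t)) * (∑ z ∈ Sᶜ, h z)
      = ∑ z ∈ Finset.univ, if z ∉ S then
          (∏ s ∈ S.erase y, q s) * (∏ t ∈ Sᶜ, (1 - q t)) * h z else 0 := by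
    intro S
    rw [Finset.mul_sum, ← Finset.sum_filter]
    congr 1
    ext x; simp
  calc ∑ S ∈ Finset.univ.filter (fun S : Finset K => y ∈ S),
      (∏ s ∈ S.erase y, q s) * (∏ t ∈ Sᶜ, (1 - q t)) * (∑ z ∈ Sᶜ, h z)
      = ∑ S ∈ Finset.univ.filter (fun S : Finset K => y ∈ S), ∑ z ∈ Finset.univ,
          if z ∉ S then (∏ s ∈ S.erase y, q s) * (∏ t ∈ Sᶜ, (1 - q t)) * h z else 0 :=
        Finset.sum_congr rfl fun S _ => step1 S
    _ = ∑ z ∈ Finset.univ, ∑ S ∈ Finset.univ.filter (fun S : Finset K => y ∈ S),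
          if z ∉ S then (∏ s ∈ S.erase y, q s) * (∏ t ∈ Sᶜ, (1 - q t)) * h z else 0 :=
        Finset.sum_comm
    _ = ∑ z ∈ Finset.univ, if z ≠ y then (1 - q z) * h z else 0 := by
        refine Finset.sum_congr rfl fun z _ => ?_
        by_cases hzy : z = y
        · subst hzy
          rw [if_neg (by simp)]
          refine Finset.sum_eq_zero fun S hS => ?_
          simp only [mem_filter, mem_univ, true_and] at hS
          rw [if_neg (by simpa using hS)]
        · rw [if_pos hzy, ← Finset.sum_filter, Finset.filter_filter]
          have := aux_key y z hzy q
          calc ∑ S ∈ Finset.univ.filter (fun S : Finset K => y ∈ S ∧ z ∉ S),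
              (∏ s ∈ S.erase y, q s) * (∏ t ∈ Sᶜ, (1 - q t)) * h z
              = (∑ S ∈ Finset.univ.filter (fun S : Finset K => y ∈ S ∧ z ∉ S),
                  (∏ s ∈ S.erase y, q s) * (∏ t ∈ Sᶜ, (1 - q t))) * h z := by
                rw [Finset.sum_mul]
            _ = (1 - q z) * h z := by rw [this]
    _ = ∑ z ∈ Finset.univ.filter (fun z => z ≠ y), (1 - q z) * h z :=
        (Finset.sum_filter _ _).symm
end

section
/- Let K be a finite type, y z : K with z ≠ y, and q : K → ℝ with q y = 1. Then ∑_{S : Finset K, y ∈ S ∧ z ∈ S} (∏_{s ∈ S, s ≠ y} q s)(∏_{t ∉ S} (1 - q t)) = q z. -/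
/-! Summing the weights `∏_{S} q * ∏_{Sᶜ} (1 - q)` over all `S ⊇ A` factors as
`∏_{A} q * ∏_{Aᶜ} (q + (1 - q)) = ∏_{A} q`. For `A = {y, z}` and `q y = 1` this is `q z`,
and `q y = 1` also lets `∏_{S.erase y} q` be replaced by `∏_{S} q`. -/

open Finset

theorem sum_superset_prod_mul_prod_compl {ι R : Type*} [Fintype ι] [DecidableEq ι]
    [CommSemiring R] (A : Finset ι) (f g : ι → R) :
    ∑ S ∈ univ.filter (A ⊆ ·), (∏ i ∈ S, f i) * ∏ i ∈ Sᶜ, g i =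
      (∏ i ∈ A, f i) * ∏ i ∈ Aᶜ, (f i + g i) := by
  -- Expand `∏ (f + g')` where `g'` kills every subset missing a point of `A`.
  set g' : ι → R := fun i => if i ∈ A then 0 else g i
  have hexpand : ∏ i, (f i + g' i) = (∏ i ∈ A, f i) * ∏ i ∈ Aᶜ, (f i + g i) := by
    rw [← prod_mul_prod_compl A]
    congr 1 <;> refine prod_congr rfl fun i hi => ?_ <;> simp_all [g']
  have hterm (S : Finset ι) :
      (∏ i ∈ S, f i) * ∏ i ∈ univ \ S, g' i =
        if A ⊆ S then (∏ i ∈ S, f i) * ∏ i ∈ Sᶜ, g i else 0 := by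
    split_ifs with hAS
    · rw [← compl_eq_univ_sdiff]
      congr 1
      exact prod_congr rfl fun i hi => if_neg fun hiA => mem_compl.1 hi (hAS hiA)
    · obtain ⟨i, hiA, hiS⟩ := not_subset.1 hAS
      rw [prod_eq_zero (mem_sdiff.2 ⟨mem_univ i, hiS⟩) (show g' i = 0 from if_pos hiA), mul_zero]
  rw [← hexpand, prod_add, powerset_univ, sum_filter]
  exact (sum_congr rfl fun S _ => hterm S).symm

theorem stmt_6_general {K : Type*} [Fintype K] [DecidableEq K] (y z : K)
    (q : K → ℝ) (hq : q y = 1) :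
    ∑ S ∈ Finset.univ.filter (fun S : Finset K => y ∈ S ∧ z ∈ S),
      (∏ s ∈ S.erase y, q s) * (∏ t ∈ Sᶜ, (1 - q t)) = q z := by
  have hfilter : univ.filter (fun S : Finset K => y ∈ S ∧ z ∈ S) = univ.filter ({y, z} ⊆ ·) := by
    simp only [insert_subset_iff, singleton_subset_iff]
  calc ∑ S ∈ univ.filter (fun S : Finset K => y ∈ S ∧ z ∈ S),
        (∏ s ∈ S.erase y, q s) * (∏ t ∈ Sᶜ, (1 - q t))
      = ∑ S ∈ univ.filter ({y, z} ⊆ ·), (∏ s ∈ S, q s) * ∏ t ∈ Sᶜ, (1 - q t) := by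
        rw [hfilter]
        simp only [prod_erase _ hq]
    _ = (∏ i ∈ {y, z}, q i) * ∏ i ∈ {y, z}ᶜ, (q i + (1 - q i)) :=
        sum_superset_prod_mul_prod_compl _ _ _
    _ = q z := by
        simp [prod_insert_of_eq_one_if_notMem fun _ => hq]

theorem stmt_6 {K : Type*} [Fintype K] [DecidableEq K] (y z : K) (hzy : z ≠ y)
    (q : K → ℝ) (hq : q y = 1) :
    ∑ S ∈ Finset.univ.filter (fun S : Finset K => y ∈ S ∧ z ∈ S),
      (∏ s ∈ S.erase y, q s) * (∏ t ∈ Sᶜ, (1 - q t)) = q z :=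
  stmt_6_general y z q hq
end

section
/- OVA reduction: Let K be a finite type, y : K, q : K → ℝ with q y = 1 and q z ≠ 0 for all z, ψ : ℝ → ℝ with ψ(t) + ψ(-t) = 1 for all t, and g : K → ℝ. Setting w z := 1 / q z for all z, we have w y · ψ(g y) + ∑_{z ≠ y} w z · q z · (ψ(g z) + 2 · ψ(-g z)) = ψ(g y) + ∑_{z ≠ y} ψ(-g z) + (Fintype.card K - 1). -/
theorem Finset.sum_add_two_mul_comp_neg_of_symm {ι : Type*} (s : Finset ι) {ψ : ℝ → ℝ}
    (hsym : ∀ t, ψ t + ψ (-t) = 1) (g : ι → ℝ) :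
    ∑ z ∈ s, (ψ (g z) + 2 * ψ (-g z)) = s.card + ∑ z ∈ s, ψ (-g z) := by
  rw [← nsmul_one, ← Finset.sum_const, ← Finset.sum_add_distrib]
  refine Finset.sum_congr rfl fun z _ => ?_
  linarith [hsym (g z)]

theorem stmt_13 {K : Type*} [Fintype K] [DecidableEq K] (y : K) (q : K → ℝ)
    (hqy : q y = 1) (hq0 : ∀ z, q z ≠ 0) (ψ : ℝ → ℝ) (hsym : ∀ t, ψ t + ψ (-t) = 1)
    (g : K → ℝ) (w : K → ℝ) (hw : ∀ z, w z = 1 / q z) :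
    w y * ψ (g y) +
        ∑ z ∈ Finset.univ.filter (fun z => z ≠ y),
          w z * q z * (ψ (g z) + 2 * ψ (-g z))
      = ψ (g y) + (∑ z ∈ Finset.univ.filter (fun z => z ≠ y), ψ (-g z)) +
          ((Fintype.card K : ℝ) - 1) := by
  have hwq : ∀ z, w z * q z = 1 := fun z => by rw [hw, one_div, inv_mul_cancel₀ (hq0 z)]
  have hwy : w y = 1 := by simpa [hqy] using hwq y
  simp only [hwq, one_mul, hwy]
  rw [Finset.sum_add_two_mul_comp_neg_of_symm _ hsym, Finset.filter_ne',
    Finset.cast_card_erase_of_mem (Finset.mem_univ y), Finset.card_univ]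
  ring
end
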